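/- Fix a resolution level R ≥ 1. The Legendre wavelets at level R form an orthonormal family in L²([0,1]): for all integers 1 ≤ h, h′ ≤ 2^{R−1} and all g, g′ ∈ ℕ, ∫₀¹ ψ_{h,g}(x) ψ_{h′,g′}(x) dx = 1 if (h,g) = (h′,g′) and 0 otherwise. -/

import Mathlib

/-!
By Rodrigues' formula, `P_g` is a multiple of the `g`-th derivative of `(y² - 1)^g`, whose
derivatives of order `< g` all vanish at `±1`. Integrating by parts `g` times over `[-1, 1]`
therefore moves all derivatives onto the other factor: this kills every polynomial of degree `< g`,
and for `P_g²` it leaves `(2g)! I_g` with `I_g = ∫ (y² - 1)^g`, evaluated by the recursion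
`(2g + 3) I_{g+1} = -(2g + 2) I_g`.
The wavelet `ψ_{h,g}` is `2^{R/2} √(g + 1/2) P_g` pulled back to `[(h - 1)/2^{R-1}, h/2^{R-1}]` by
the affine map `x ↦ 2^R x - 2h + 1`. Intervals with distinct `h` meet in at most one point, and for
equal `h` the substitution `y = 2^R x - 2h + 1` reduces to the orthonormality of the
`√(g + 1/2) P_g` on `[-1, 1]`.
-/

open MeasureTheory

/-- The Legendre polynomial of degree `g` on `[−1,1]`, via the Rodrigues formula
`P_g(y) = (1/(2^g g!)) (d/dy)^g [(y² − 1)^g]`. -/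
noncomputable def legendreP (g : ℕ) (y : ℝ) : ℝ :=
  (1 / ((2 : ℝ) ^ g * (g.factorial : ℝ))) * iteratedDeriv g (fun z : ℝ => (z ^ 2 - 1) ^ g) y

/-- The Legendre wavelet `ψ_{h,g}` at resolution level `R`. -/
noncomputable def legendreWavelet (R h g : ℕ) (x : ℝ) : ℝ :=
  if ((h : ℝ) - 1) / 2 ^ (R - 1) ≤ x ∧ x ≤ (h : ℝ) / 2 ^ (R - 1) then
    (2 : ℝ) ^ ((R : ℝ) / 2) * Real.sqrt ((g : ℝ) + 1 / 2) *
      legendreP g (2 ^ R * x - 2 * (h : ℝ) + 1)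
  else 0

open Set Polynomial intervalIntegral

namespace Polynomial

theorem iterate_derivative_natDegree {R : Type*} [CommSemiring R] (p : R[X]) :
    derivative^[p.natDegree] p = C (p.natDegree.factorial * p.leadingCoeff) := by
  have hdeg : (derivative^[p.natDegree] p).natDegree ≤ 0 :=
    (natDegree_iterate_derivative p _).trans_eq (Nat.sub_self _)
  rw [eq_C_of_natDegree_le_zero hdeg, coeff_iterate_derivative, zero_add,
    Nat.descFactorial_self, nsmul_eq_mul, leadingCoeff]

theorem iteratedDeriv_eval (p : ℝ[X]) (n : ℕ) :
    iteratedDeriv n (fun x => p.eval x) = fun x => (derivative^[n] p).eval x := by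
  induction n with
  | zero => simp
  | succ n ih =>
    rw [iteratedDeriv_succ, ih, Function.iterate_succ_apply']
    funext x
    exact Polynomial.deriv _

theorem intervalIntegrable_eval (p : ℝ[X]) (a b : ℝ) :
    IntervalIntegrable (fun x => p.eval x) volume a b :=
  p.continuous.intervalIntegrable a b

theorem integral_eval_derivative (p : ℝ[X]) (a b : ℝ) :
    ∫ x in a..b, (derivative p).eval x = p.eval b - p.eval a :=
  integral_eq_sub_of_hasDerivAt (fun x _ => p.hasDerivAt x) (intervalIntegrable_eval _ _ _)

theorem integral_eval_derivative_mul {p : ℝ[X]} (q : ℝ[X]) {a b : ℝ} (ha : p.eval a = 0)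
    (hb : p.eval b = 0) :
    ∫ x in a..b, (derivative p).eval x * q.eval x =
      -∫ x in a..b, p.eval x * (derivative q).eval x := by
  rw [integral_mul_deriv_eq_deriv_mul (fun x _ => p.hasDerivAt x) (fun x _ => q.hasDerivAt x)
    (intervalIntegrable_eval _ _ _) (intervalIntegrable_eval _ _ _), ha, hb]
  ring

end Polynomial

noncomputable def rodriguesPoly (g : ℕ) : ℝ[X] := (X ^ 2 - 1) ^ g

theorem monic_rodriguesPoly (g : ℕ) : (rodriguesPoly g).Monic := by
  simpa [rodriguesPoly] using (monic_X_pow_sub_C (1 : ℝ) two_ne_zero).pow g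

theorem natDegree_rodriguesPoly (g : ℕ) : (rodriguesPoly g).natDegree = 2 * g := by
  rw [rodriguesPoly, natDegree_pow, ← C_1, natDegree_X_pow_sub_C, mul_comm]

theorem iterate_derivative_two_mul_rodriguesPoly (g : ℕ) :
    derivative^[2 * g] (rodriguesPoly g) = C ((2 * g).factorial : ℝ) := by
  simpa [natDegree_rodriguesPoly, (monic_rodriguesPoly g).leadingCoeff] using
    iterate_derivative_natDegree (rodriguesPoly g)

theorem eval_iterate_derivative_rodriguesPoly {g k : ℕ} (hk : k < g) {y : ℝ} (hy : y ^ 2 = 1) :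
    (derivative^[k] (rodriguesPoly g)).eval y = 0 := by
  have hroot : X - C y ∣ X ^ 2 - 1 := dvd_iff_isRoot.2 (by simp [hy])
  obtain ⟨q, hq⟩ := pow_sub_dvd_iterate_derivative_of_pow_dvd k (pow_dvd_pow_of_dvd hroot g)
  rw [rodriguesPoly, hq, eval_mul, eval_pow, eval_sub, eval_X, eval_C, sub_self,
    zero_pow (Nat.sub_ne_zero_of_lt hk), zero_mul]

theorem legendreP_eq_eval (g : ℕ) (y : ℝ) :
    legendreP g y = 1 / (2 ^ g * g.factorial) * (derivative^[g] (rodriguesPoly g)).eval y := by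
  have h : (fun z : ℝ => (z ^ 2 - 1) ^ g) = fun z => (rodriguesPoly g).eval z := by
    simp [rodriguesPoly]
  rw [legendreP, h, iteratedDeriv_eval]

theorem integral_iterate_derivative_rodriguesPoly_mul (g : ℕ) (q : ℝ[X]) {k : ℕ} (hk : k ≤ g) :
    ∫ y in (-1 : ℝ)..1, (derivative^[g] (rodriguesPoly g)).eval y * q.eval y =
      (-1) ^ k * ∫ y in (-1 : ℝ)..1,
        (derivative^[g - k] (rodriguesPoly g)).eval y * (derivative^[k] q).eval y := by
  induction k with
  | zero => simp
  | succ k ih =>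
    have hlt : g - (k + 1) < g := by omega
    rw [ih (by omega), show g - k = g - (k + 1) + 1 by omega, Function.iterate_succ_apply',
      integral_eval_derivative_mul _ (eval_iterate_derivative_rodriguesPoly hlt (by norm_num))
        (eval_iterate_derivative_rodriguesPoly hlt (by norm_num)),
      ← Function.iterate_succ_apply' derivative k q]
    ring

theorem integral_iterate_derivative_rodriguesPoly_mul_eq_zero {g : ℕ} {q : ℝ[X]}
    (hq : q.natDegree < g) :
    ∫ y in (-1 : ℝ)..1, (derivative^[g] (rodriguesPoly g)).eval y * q.eval y = 0 := by
  simp [integral_iterate_derivative_rodriguesPoly_mul g q le_rfl, iterate_derivative_eq_zero hq]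

theorem integral_rodriguesPoly_succ (g : ℕ) :
    (2 * g + 3) * ∫ y in (-1 : ℝ)..1, (rodriguesPoly (g + 1)).eval y =
      -((2 * g + 2) * ∫ y in (-1 : ℝ)..1, (rodriguesPoly g).eval y) := by
  have hderiv : derivative (X * rodriguesPoly (g + 1)) =
      C (2 * g + 3 : ℝ) * rodriguesPoly (g + 1) + C (2 * g + 2 : ℝ) * rodriguesPoly g := by
    simp only [rodriguesPoly, derivative_mul, derivative_pow, derivative_X, derivative_sub,
      derivative_one, map_add, map_mul, map_natCast, C_ofNat, Nat.add_sub_cancel]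
    push_cast
    ring
  -- `x (x² - 1)^(g+1)` vanishes at `±1`, so its derivative integrates to `0`.
  have hftc := integral_eval_derivative (X * rodriguesPoly (g + 1)) (-1) 1
  simp only [hderiv, eval_add, eval_mul, eval_C] at hftc
  rw [integral_add ((intervalIntegrable_eval _ _ _).const_mul _)
    ((intervalIntegrable_eval _ _ _).const_mul _), intervalIntegral.integral_const_mul,
    intervalIntegral.integral_const_mul] at hftc
  simp only [rodriguesPoly, eval_pow, eval_sub, eval_X, eval_one] at hftc ⊢
  norm_num at hftc
  linarith

theorem factorial_mul_integral_rodriguesPoly (g : ℕ) :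
    ((2 * g + 1).factorial : ℝ) * ∫ y in (-1 : ℝ)..1, (rodriguesPoly g).eval y =
      (-1) ^ g * 2 ^ (2 * g + 1) * (g.factorial : ℝ) ^ 2 := by
  induction g with
  | zero => simp [rodriguesPoly]; norm_num
  | succ g ih =>
    have hfac : ((2 * (g + 1) + 1).factorial : ℝ) =
        (2 * g + 2) * (2 * g + 3) * (2 * g + 1).factorial := by
      rw [show 2 * (g + 1) + 1 = 2 * g + 1 + 1 + 1 by ring, Nat.factorial_succ,
        Nat.factorial_succ]
      push_cast
      ring
    rw [hfac, Nat.factorial_succ g, Nat.cast_mul, Nat.cast_succ]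
    linear_combination (2 * g + 2) * ((2 * g + 1).factorial : ℝ) * integral_rodriguesPoly_succ g
      - (2 * g + 2) ^ 2 * ih

theorem integral_iterate_derivative_rodriguesPoly_mul_self (g : ℕ) :
    ∫ y in (-1 : ℝ)..1,
        (derivative^[g] (rodriguesPoly g)).eval y * (derivative^[g] (rodriguesPoly g)).eval y =
      2 ^ (2 * g + 1) * (g.factorial : ℝ) ^ 2 / (2 * g + 1) := by
  rw [integral_iterate_derivative_rodriguesPoly_mul g _ le_rfl, Nat.sub_self,
    Function.iterate_zero_apply, ← Function.iterate_add_apply, ← two_mul,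
    iterate_derivative_two_mul_rodriguesPoly]
  simp only [eval_C, intervalIntegral.integral_mul_const]
  have hfac : ((2 * g + 1).factorial : ℝ) = (2 * g + 1) * (2 * g).factorial := by
    push_cast [Nat.factorial_succ]
    ring
  have hsign : ((-1 : ℝ) ^ g) ^ 2 = 1 := by rw [← pow_mul, pow_mul', neg_one_sq, one_pow]
  have hI := factorial_mul_integral_rodriguesPoly g
  rw [hfac] at hI
  field_simp
  linear_combination (-1 : ℝ) ^ g * hI + 2 ^ (2 * g + 1) * (g.factorial : ℝ) ^ 2 * hsign

theorem integral_legendreP_mul_legendreP_of_lt {g g' : ℕ} (hlt : g' < g) :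
    ∫ y in (-1 : ℝ)..1, legendreP g y * legendreP g' y = 0 := by
  simp_rw [legendreP_eq_eval, mul_mul_mul_comm]
  rw [intervalIntegral.integral_const_mul,
    integral_iterate_derivative_rodriguesPoly_mul_eq_zero, mul_zero]
  exact (natDegree_iterate_derivative _ _).trans_lt (by rw [natDegree_rodriguesPoly]; omega)

theorem integral_legendreP_mul_self (g : ℕ) :
    ∫ y in (-1 : ℝ)..1, legendreP g y * legendreP g y = 2 / (2 * g + 1) := by
  simp_rw [legendreP_eq_eval, mul_mul_mul_comm]
  rw [intervalIntegral.integral_const_mul, integral_iterate_derivative_rodriguesPoly_mul_self]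
  field_simp
  ring

theorem integral_legendreP_mul_legendreP (g g' : ℕ) :
    ∫ y in (-1 : ℝ)..1, legendreP g y * legendreP g' y =
      if g = g' then (2 / (2 * g + 1) : ℝ) else 0 := by
  rcases lt_trichotomy g g' with hlt | rfl | hgt
  · simp only [mul_comm (legendreP g _) (legendreP g' _)]
    rw [integral_legendreP_mul_legendreP_of_lt hlt, if_neg hlt.ne]
  · rw [integral_legendreP_mul_self, if_pos rfl]
  · rw [integral_legendreP_mul_legendreP_of_lt hgt, if_neg hgt.ne']

noncomputable def normalizedLegendreP (g : ℕ) (y : ℝ) : ℝ := √((g : ℝ) + 1 / 2) * legendreP g y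

theorem integral_normalizedLegendreP_mul_normalizedLegendreP (g g' : ℕ) :
    ∫ y in (-1 : ℝ)..1, normalizedLegendreP g y * normalizedLegendreP g' y =
      if g = g' then 1 else 0 := by
  have hsplit (y : ℝ) : normalizedLegendreP g y * normalizedLegendreP g' y =
      √((g : ℝ) + 1 / 2) * √((g' : ℝ) + 1 / 2) * (legendreP g y * legendreP g' y) :=
    mul_mul_mul_comm _ _ _ _
  simp only [hsplit]
  rw [intervalIntegral.integral_const_mul, integral_legendreP_mul_legendreP]
  split_ifs with hg
  · subst hg
    rw [Real.mul_self_sqrt (by positivity)]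
    field_simp
  · rw [mul_zero]

theorem integral_indicator_Icc_of_le {E : Type*} [NormedAddCommGroup E] [NormedSpace ℝ E]
    {f : ℝ → E} {a b c d : ℝ} (hca : c ≤ a) (hab : a ≤ b) (hbd : b ≤ d) :
    ∫ x in c..d, (Icc a b).indicator f x = ∫ x in a..b, f x := by
  have hIoc : (Icc a b).indicator f =ᵐ[volume.restrict (Ioc c d)] (Ioc a b).indicator f :=
    ae_restrict_of_ae (indicator_ae_eq_of_ae_eq_set Ioc_ae_eq_Icc.symm)
  rw [integral_of_le (hca.trans (hab.trans hbd)), integral_of_le hab, integral_congr_ae hIoc,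
    setIntegral_indicator measurableSet_Ioc, inter_eq_right.2 (Ioc_subset_Ioc hca hbd)]

theorem volume_Icc_inter_Icc_of_le {a b a' b' : ℝ} (h : b ≤ a') :
    volume (Icc a b ∩ Icc a' b') = 0 :=
  measure_mono_null (t := Icc a' b) (fun _ hx => ⟨hx.2.1, hx.1.2⟩)
    (by rw [Real.volume_Icc, ENNReal.ofReal_eq_zero]; linarith)

def waveletInterval (R h : ℕ) : Set ℝ := Icc (((h : ℝ) - 1) / 2 ^ (R - 1)) ((h : ℝ) / 2 ^ (R - 1))

theorem legendreWavelet_eq_indicator (R h g : ℕ) :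
    legendreWavelet R h g = (waveletInterval R h).indicator
      fun x => 2 ^ ((R : ℝ) / 2) * normalizedLegendreP g (2 ^ R * x - 2 * h + 1) := by
  funext x
  simp only [legendreWavelet, indicator, waveletInterval, mem_Icc, normalizedLegendreP, mul_assoc]

theorem integral_legendreWavelet_mul_legendreWavelet_of_lt {R h h' : ℕ} (g g' : ℕ) (hlt : h < h')
    (a b : ℝ) :
    ∫ x in a..b, legendreWavelet R h g x * legendreWavelet R h' g' x = 0 := by
  have hsep : (h : ℝ) / 2 ^ (R - 1) ≤ ((h' : ℝ) - 1) / 2 ^ (R - 1) := by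
    gcongr
    linarith [show (h : ℝ) + 1 ≤ h' by exact_mod_cast hlt]
  simp only [legendreWavelet_eq_indicator, ← inter_indicator_mul]
  exact integral_zero_ae ((indicator_meas_zero (volume_Icc_inter_Icc_of_le hsep)).mono
    fun x hx _ => hx)

theorem integral_legendreWavelet_mul_legendreWavelet_self {R h : ℕ} (hR : 1 ≤ R) (hh₁ : 1 ≤ h)
    (hh₂ : h ≤ 2 ^ (R - 1)) (g g' : ℕ) :
    ∫ x in (0 : ℝ)..1, legendreWavelet R h g x * legendreWavelet R h g' x =
      if g = g' then 1 else 0 := by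
  have hpow : (2 : ℝ) ^ R = 2 * 2 ^ (R - 1) := by rw [← pow_succ', Nat.sub_add_cancel hR]
  have hsqrt : (2 : ℝ) ^ ((R : ℝ) / 2) * 2 ^ ((R : ℝ) / 2) = 2 ^ R := by
    rw [← Real.rpow_add two_pos, add_halves, Real.rpow_natCast]
  have hh₁' : (1 : ℝ) ≤ h := by exact_mod_cast hh₁
  have hh₂' : (h : ℝ) ≤ 2 ^ (R - 1) := by exact_mod_cast hh₂
  have hsplit (x : ℝ) :
      2 ^ ((R : ℝ) / 2) * normalizedLegendreP g (2 ^ R * x - 2 * h + 1) *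
        (2 ^ ((R : ℝ) / 2) * normalizedLegendreP g' (2 ^ R * x - 2 * h + 1)) =
      2 ^ R * (normalizedLegendreP g (2 ^ R * x + (1 - 2 * h)) *
        normalizedLegendreP g' (2 ^ R * x + (1 - 2 * h))) := by
    rw [mul_mul_mul_comm, hsqrt, ← add_sub_assoc, sub_add_eq_add_sub]
  simp only [legendreWavelet_eq_indicator, ← inter_indicator_mul, inter_self, waveletInterval]
  rw [integral_indicator_Icc_of_le (div_nonneg (sub_nonneg.2 hh₁') (by positivity))
      (by gcongr; linarith)
      ((div_le_one (by positivity)).2 hh₂')]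
  simp only [hsplit]
  rw [intervalIntegral.integral_const_mul, ← smul_eq_mul,
    smul_integral_comp_mul_add (f := fun y => normalizedLegendreP g y * normalizedLegendreP g' y),
    hpow]
  convert integral_normalizedLegendreP_mul_normalizedLegendreP g g' using 2 <;> field_simp <;>
    ring

theorem legendreWavelet_orthonormal_general (R : ℕ) (hR : 1 ≤ R) (h h' g g' : ℕ)
    (hh₁ : 1 ≤ h) (hh₂ : h ≤ 2 ^ (R - 1)) :
    ∫ x in (0 : ℝ)..1, legendreWavelet R h g x * legendreWavelet R h' g' x =
      if (h, g) = (h', g') then 1 else 0 := by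
  rcases lt_trichotomy h h' with hlt | rfl | hgt
  · rw [integral_legendreWavelet_mul_legendreWavelet_of_lt g g' hlt, if_neg (by simp [hlt.ne])]
  · simp [integral_legendreWavelet_mul_legendreWavelet_self hR hh₁ hh₂]
  · simp only [mul_comm (legendreWavelet R h g _)]
    rw [integral_legendreWavelet_mul_legendreWavelet_of_lt g' g hgt, if_neg (by simp [hgt.ne'])]

/-- Orthonormality of the Legendre wavelets at resolution level `R` in `L²([0,1])`:
`∫₀¹ ψ_{h,g} ψ_{h′,g′} = δ_{(h,g),(h′,g′)}`. -/
theorem legendreWavelet_orthonormal (R : ℕ) (hR : 1 ≤ R) (h h' g g' : ℕ)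
    (hh₁ : 1 ≤ h) (hh₂ : h ≤ 2 ^ (R - 1)) (hh'₁ : 1 ≤ h') (hh'₂ : h' ≤ 2 ^ (R - 1)) :
    ∫ x in (0 : ℝ)..1, legendreWavelet R h g x * legendreWavelet R h' g' x =
      if (h, g) = (h', g') then 1 else 0 :=
  legendreWavelet_orthonormal_general R hR h h' g g' hh₁ hh₂
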